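/- For a deck-shuffler IET T_l with A = ∪A_i, B = ∪B_i, define H_l(x) = Σ_{n≥0} χ_B(T_l^n x)/2^{n+1}. Then H_l intertwines the dynamics: E_2(H_l(x)) = H_l(T_l(x)) for all x ∈ [0,1), where E_2(y) = 2y mod 1. -/
import Mathlib


/-- The `i`-th interval `A_i` of a deck-shuffler IET, determined by the lengths `lA`. -/
def petalA (m : ℕ) (lA : Fin m → ℝ) (i : Fin m) : Set ℝ :=
  Set.Ico (∑ j ∈ Finset.Iio i, lA j) ((∑ j ∈ Finset.Iio i, lA j) + lA i)

/-- The `i`-th interval `B_i` of a deck-shuffler IET. -/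
def petalB (m : ℕ) (lA lB : Fin m → ℝ) (i : Fin m) : Set ℝ :=
  Set.Ico ((∑ j, lA j) + ∑ j ∈ Finset.Iio i, lB j)
    (((∑ j, lA j) + ∑ j ∈ Finset.Iio i, lB j) + lB i)

/-- `A = A_1 ∪ … ∪ A_m`. -/
def setA (m : ℕ) (lA : Fin m → ℝ) : Set ℝ := ⋃ i, petalA m lA i

/-- `B = B_1 ∪ … ∪ B_m`. -/
def setB (m : ℕ) (lA lB : Fin m → ℝ) : Set ℝ := ⋃ i, petalB m lA lB i

/-- `T` is the `2m`-interval deck-shuffler IET with length data `lA, lB`: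
the intervals `A_1 < … < A_m < B_1 < … < B_m` have positive lengths summing to `1`,
and `T x = x + |B_1| + … + |B_i|` on `A_i`, `T x = x − |A_i| − … − |A_m|` on `B_i`
(so the image order is `T(B_1) < T(A_1) < … < T(B_m) < T(A_m)`). -/
def IsDeckShuffler (m : ℕ) (lA lB : Fin m → ℝ) (T : ℝ → ℝ) : Prop :=
  0 < m ∧ (∀ i, 0 < lA i) ∧ (∀ i, 0 < lB i) ∧
  ((∑ i, lA i) + (∑ i, lB i) = 1) ∧
  (∀ i, ∀ x ∈ petalA m lA i, T x = x + ∑ j ∈ Finset.Iic i, lB j) ∧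
  (∀ i, ∀ x ∈ petalB m lA lB i, T x = x - ∑ j ∈ Finset.Ici i, lA j)

/-- `H_l(x) = Σ_{n≥0} χ_B(T^n x) / 2^(n+1)`. -/
noncomputable def Hmap (m : ℕ) (lA lB : Fin m → ℝ) (T : ℝ → ℝ) (x : ℝ) : ℝ :=
  ∑' n : ℕ, (setB m lA lB).indicator (fun _ => (1 : ℝ)) (T^[n] x) / 2 ^ (n + 1)

theorem stmt10 (m : ℕ) (lA lB : Fin m → ℝ) (T : ℝ → ℝ)
    (hT : IsDeckShuffler m lA lB T) :
    ∀ x ∈ Set.Ico (0 : ℝ) 1,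
      Int.fract (2 * Hmap m lA lB T x) = Hmap m lA lB T (T x) := by
  obtain ⟨hm, hA, hB, hsum, hTA, hTB⟩ := hT
  intro x hx
  set χ : ℝ → ℝ := (setB m lA lB).indicator (fun _ => 1) with hχdef
  have hχ01 : ∀ y, χ y = 0 ∨ χ y = 1 := by
    intro y
    by_cases h : y ∈ setB m lA lB
    · right; simp [hχdef, Set.indicator_of_mem h]
    · left; simp [hχdef, Set.indicator_of_notMem h]
  have hχnn : ∀ y, 0 ≤ χ y := by intro y; rcases hχ01 y with h | h <;> rw [h] <;> norm_num
  have hχle : ∀ y, χ y ≤ 1 := by intro y; rcases hχ01 y with h | h <;> rw [h] <;> norm_num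
  have hgeom : Summable (fun n : ℕ => (1:ℝ)/2^(n+1)) := by
    have h := (summable_geometric_of_lt_one (by norm_num : (0:ℝ) ≤ 1/2)
      (by norm_num : (1/2:ℝ) < 1)).mul_left (1/2 : ℝ)
    have he : (fun n : ℕ => (1:ℝ)/2^(n+1)) = fun n => (1/2:ℝ) * (1/2)^n := by
      funext n; rw [one_div_pow]; ring
    rw [he]; exact h
  have hgeomsum : ∑' n : ℕ, (1:ℝ)/2^(n+1) = 1 := by
    have he : (fun n : ℕ => (1:ℝ)/2^(n+1)) = fun n => (1/2:ℝ) * (1/2)^n := by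
      funext n; rw [one_div_pow]; ring
    rw [he, tsum_mul_left, tsum_geometric_of_lt_one (by norm_num) (by norm_num)]
    norm_num
  have hsummable : ∀ y : ℝ, Summable (fun n : ℕ => χ (T^[n] y) / 2 ^ (n+1)) := by
    intro y
    refine Summable.of_nonneg_of_le (fun n => ?_) (fun n => ?_) hgeom
    · exact div_nonneg (hχnn _) (by positivity)
    · apply div_le_div_of_nonneg_right (hχle _)
      positivity
  have hrec : ∀ y : ℝ, Hmap m lA lB T y = χ y / 2 + Hmap m lA lB T (T y) / 2 := by
    intro y
    have hH : ∀ z : ℝ, Hmap m lA lB T z = ∑' n : ℕ, χ (T^[n] z) / 2 ^ (n+1) := fun z => rfl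
    rw [hH, hH, Summable.tsum_eq_zero_add (hsummable y)]
    have he : ∀ n : ℕ, χ (T^[n+1] y) / 2 ^ (n+1+1) = χ (T^[n] (T y)) / 2 ^ (n+1) / 2 := by
      intro n; rw [Function.iterate_succ_apply]; ring
    simp_rw [he]
    rw [tsum_div_const]
    norm_num
  have hnotB : ∀ y : ℝ, ∃ n, T^[n] y ∉ setB m lA lB := by
    intro y
    by_contra h
    push_neg at h
    have hL : (0:ℝ) < ∑ i, lA i :=
      Finset.sum_pos (fun i _ => hA i) (Finset.univ_nonempty_iff.mpr (Fin.pos_iff_nonempty.mp hm))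
    set lastI : Fin m := ⟨m-1, by omega⟩ with hlastI
    have hc : 0 < lA lastI := hA lastI
    have hmemL : ∀ z ∈ setB m lA lB, (∑ i, lA i) ≤ z := by
      intro z hz
      obtain ⟨i, hi⟩ := Set.mem_iUnion.mp hz
      have h1 := hi.1
      have h0 : (0:ℝ) ≤ ∑ j ∈ Finset.Iio i, lB j := Finset.sum_nonneg fun j _ => (hB j).le
      linarith
    have hstep : ∀ z ∈ setB m lA lB, T z ≤ z - lA lastI := by
      intro z hz
      obtain ⟨i, hi⟩ := Set.mem_iUnion.mp hz
      rw [hTB i z hi]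
      have hle : lA lastI ≤ ∑ j ∈ Finset.Ici i, lA j := by
        apply Finset.single_le_sum (fun j _ => (hA j).le)
        simp only [Finset.mem_Ici, hlastI, Fin.le_def]
        omega
      linarith
    have hiter : ∀ n : ℕ, T^[n] y ≤ y - n * lA lastI := by
      intro n
      induction n with
      | zero => simp
      | succ n ih =>
        rw [Function.iterate_succ_apply']
        have h2 := hstep _ (h n)
        push_cast
        linarith
    obtain ⟨n, hn⟩ := exists_nat_gt ((y - ∑ i, lA i) / lA lastI)
    rw [div_lt_iff₀ hc] at hn
    have h3 := hmemL _ (h n)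
    have h4 := hiter n
    linarith
  have hnn : ∀ y : ℝ, 0 ≤ Hmap m lA lB T y := by
    intro y
    exact tsum_nonneg fun n => div_nonneg (hχnn _) (by positivity)
  have hlt : ∀ y : ℝ, Hmap m lA lB T y < 1 := by
    intro y
    obtain ⟨n, hn⟩ := hnotB y
    have hH : Hmap m lA lB T y = ∑' n : ℕ, χ (T^[n] y) / 2 ^ (n+1) := rfl
    rw [hH, ← hgeomsum]
    refine Summable.tsum_lt_tsum (i := n) (f := fun n : ℕ => χ (T^[n] y) / 2 ^ (n+1))
      (fun k => div_le_div_of_nonneg_right (hχle _) (by positivity)) ?_ (hsummable y) hgeom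
    show χ (T^[n] y) / 2 ^ (n+1) < 1 / 2 ^ (n+1)
    rw [hχdef]
    rw [Set.indicator_of_notMem hn, zero_div]
    positivity
  have h2 : 2 * Hmap m lA lB T x = χ x + Hmap m lA lB T (T x) := by
    rw [hrec x]; ring
  rw [h2]
  have hfr : Int.fract (Hmap m lA lB T (T x)) = Hmap m lA lB T (T x) :=
    Int.fract_eq_self.mpr ⟨hnn _, hlt _⟩
  rcases hχ01 x with h | h <;> rw [h]
  · rw [zero_add, hfr]
  · rw [show (1:ℝ) + Hmap m lA lB T (T x) = ((1:ℤ):ℝ) + Hmap m lA lB T (T x) by norm_num,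
      Int.fract_intCast_add, hfr]
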